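/- arXiv:2405.05095 — 2 statements merged into one kernel-verified Lean document; each statement's English description precedes it below -/
import Mathlib

section
/- For every s > 0, the sum of the sampled Gaussian kernel over the integers satisfies ∑_{n∈ℤ} g(n; s) ≥ 1, i.e., the unnormalised sampled Gaussian kernel's ℓ¹ mass is at least 1. -/
noncomputable def gauss (s x : ℝ) : ℝ :=
  (Real.sqrt (2 * Real.pi * s))⁻¹ * Real.exp (-x ^ 2 / (2 * s))

lemma summable_exp_neg_sq {b : ℝ} (hb : 0 < b) :
    Summable fun n : ℤ => Real.exp (-b * (n : ℝ) ^ 2) := by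
  have hnat : Summable fun n : ℕ => Real.exp (-b * (n : ℝ) ^ 2) := by
    have hgeo : Summable fun n : ℕ => Real.exp (-b) ^ n :=
      summable_geometric_of_lt_one (Real.exp_pos _).le
        (Real.exp_lt_one_iff.mpr (by linarith))
    refine hgeo.of_nonneg_of_le (fun n => (Real.exp_pos _).le) (fun n => ?_)
    rw [← Real.exp_nat_mul]
    apply Real.exp_le_exp.mpr
    have hn : n ≤ n ^ 2 := Nat.le_self_pow two_ne_zero n
    have : (n : ℝ) ≤ (n : ℝ) ^ 2 := by exact_mod_cast hn
    nlinarith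
  refine Summable.of_nat_of_neg hnat ?_
  simpa using hnat

theorem sampled_gauss_sum_ge_one (s : ℝ) (hs : 0 < s) :
    1 ≤ ∑' n : ℤ, gauss s (n : ℝ) := by
  have hπ := Real.pi_pos
  set a : ℝ := 1 / (2 * Real.pi * s) with ha
  have ha0 : 0 < a := by positivity
  have key := Real.tsum_exp_neg_mul_int_sq ha0
  have h1 : ∀ n : ℤ, -Real.pi * a * (n : ℝ) ^ 2 = -(n : ℝ) ^ 2 / (2 * s) := by
    intro n
    field_simp [ha]
    rw [ha]; field_simp
  have h2 : -Real.pi / a = -(2 * Real.pi ^ 2 * s) := by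
    rw [ha]; field_simp
  simp only [h1, h2] at key
  have hrt : (1 : ℝ) / a ^ (1 / 2 : ℝ) = Real.sqrt (2 * Real.pi * s) := by
    rw [ha, one_div, one_div, Real.inv_rpow (by positivity), inv_inv, ← Real.sqrt_eq_rpow]
  rw [hrt] at key
  have hsum : Summable fun n : ℤ => Real.exp (-(2 * Real.pi ^ 2 * s) * (n : ℝ) ^ 2) :=
    summable_exp_neg_sq (by positivity)
  have hS : (1 : ℝ) ≤ ∑' n : ℤ, Real.exp (-(2 * Real.pi ^ 2 * s) * (n : ℝ) ^ 2) := by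
    have := Summable.le_tsum hsum 0 (fun i _ => (Real.exp_pos _).le)
    simpa using this
  have hsqrt : 0 < Real.sqrt (2 * Real.pi * s) := Real.sqrt_pos.mpr (by positivity)
  calc (1 : ℝ) ≤ ∑' n : ℤ, Real.exp (-(2 * Real.pi ^ 2 * s) * (n : ℝ) ^ 2) := hS
    _ = (Real.sqrt (2 * Real.pi * s))⁻¹ *
        ∑' n : ℤ, Real.exp (-(n : ℝ) ^ 2 / (2 * s)) := by
        rw [key]; field_simp
    _ = ∑' n : ℤ, gauss s (n : ℝ) := by
        rw [← tsum_mul_left]; rfl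
end

section
/- Scale covariance of scale-normalised Gaussian derivatives in 1-D: if f'(x') = f(x) for x' = S x with S > 0, and L, L' denote the scale-space representations of f, f', then for s' = S² s the scale-normalised derivatives satisfy s^{γα/2} ∂_x^α L(x; s) = S^{α(1−γ)} · (s')^{γα/2} ∂_{x'}^α L'(x'; s'). -/
open MeasureTheory

/-- The scale-space representation of a 1-D signal. -/
noncomputable def scaleSpace (f : ℝ → ℝ) (x s : ℝ) : ℝ :=
  ∫ u : ℝ, gauss s u * f (x - u)

/-- Unconditional chain rule for `deriv` under multiplication by a nonzero constant. -/
lemma deriv_comp_const_mul' (g : ℝ → ℝ) {c : ℝ} (hc : c ≠ 0) (x : ℝ) :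
    deriv (fun y => g (c * y)) x = c * deriv g (c * x) := by
  by_cases hg : DifferentiableAt ℝ g (c * x)
  · have h : HasDerivAt (fun y => g (c * y)) (deriv g (c * x) * c) x :=
      hg.hasDerivAt.comp x ((hasDerivAt_id x).const_mul c) |>.congr_deriv (by simp)
    rw [h.deriv, mul_comm]
  · have h1 : ¬ DifferentiableAt ℝ (fun y => g (c * y)) x := by
      intro h
      apply hg
      have h2 : DifferentiableAt ℝ ((fun y => g (c * y)) ∘ fun z => c⁻¹ * z) (c * x) :=
        DifferentiableAt.comp _ (by rwa [inv_mul_cancel_left₀ hc])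
          (differentiableAt_id.const_mul c⁻¹)
      exact h2.congr_of_eventuallyEq (Filter.Eventually.of_forall fun z => by
        simp [Function.comp, mul_inv_cancel_left₀ hc])
    rw [deriv_zero_of_not_differentiableAt hg, deriv_zero_of_not_differentiableAt h1, mul_zero]

lemma iteratedDeriv_comp_const_mul' (g : ℝ → ℝ) {c : ℝ} (hc : c ≠ 0) (n : ℕ) :
    iteratedDeriv n (fun y => g (c * y)) = fun x => c ^ n * iteratedDeriv n g (c * x) := by
  induction n with
  | zero => simp
  | succ n ih =>
    funext x
    rw [iteratedDeriv_succ, ih, deriv_const_mul_field,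
      deriv_comp_const_mul' (iteratedDeriv n g) hc x, iteratedDeriv_succ]
    ring

lemma gauss_scale {s : ℝ} (hs : 0 < s) {S : ℝ} (hS : 0 < S) (v : ℝ) :
    gauss (S ^ 2 * s) (S * v) = S⁻¹ * gauss s v := by
  unfold gauss
  have h2 : (2 : ℝ) * Real.pi * (S ^ 2 * s) = S ^ 2 * (2 * Real.pi * s) := by ring
  rw [h2, Real.sqrt_mul (by positivity), Real.sqrt_sq hS.le]
  have h3 : -(S * v) ^ 2 / (2 * (S ^ 2 * s)) = -v ^ 2 / (2 * s) := by
    field_simp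
  rw [h3, mul_inv]
  ring

lemma scaleSpace_scale (f : ℝ → ℝ) {S : ℝ} (hS : 0 < S) {s : ℝ} (hs : 0 < s) (y : ℝ) :
    scaleSpace (fun z => f (z / S)) y (S ^ 2 * s) = scaleSpace f (y / S) s := by
  unfold scaleSpace
  have key : (∫ u : ℝ, gauss (S ^ 2 * s) u * f ((y - u) / S))
      = S * ∫ v : ℝ, gauss (S ^ 2 * s) (S * v) * f ((y - S * v) / S) := by
    rw [Measure.integral_comp_mul_left (fun u => gauss (S ^ 2 * s) u * f ((y - u) / S)) S,
      abs_inv, abs_of_pos hS, smul_eq_mul]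
    field_simp
  simp only [key]
  have h4 : ∀ v : ℝ, gauss (S ^ 2 * s) (S * v) * f ((y - S * v) / S)
      = S⁻¹ * (gauss s v * f (y / S - v)) := by
    intro v
    have hv : (y - S * v) / S = y / S - v := by field_simp
    rw [gauss_scale hs hS, hv]
    ring
  simp only [h4, integral_const_mul]
  rw [← mul_assoc, mul_inv_cancel₀ hS.ne', one_mul]

theorem scale_covariance_of_scale_normalised_derivatives
    (f : ℝ → ℝ) (hf : Integrable f) (S : ℝ) (hS : 0 < S)
    (γ : ℝ) (hγ : 0 < γ) (α : ℕ) (hα : 1 ≤ α) (x s : ℝ) (hs : 0 < s) :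
    s ^ (γ * (α : ℝ) / 2) * iteratedDeriv α (fun y => scaleSpace f y s) x =
      S ^ ((α : ℝ) * (1 - γ)) *
        ((S ^ 2 * s) ^ (γ * (α : ℝ) / 2) *
          iteratedDeriv α (fun y => scaleSpace (fun z => f (z / S)) y (S ^ 2 * s))
            (S * x)) := by
  have hfun : (fun y => scaleSpace (fun z => f (z / S)) y (S ^ 2 * s))
      = fun y => (fun t => scaleSpace f t s) (S⁻¹ * y) := by
    funext y
    rw [scaleSpace_scale f hS hs, div_eq_inv_mul]
  have hfun2 : iteratedDeriv α (fun y => (fun t => scaleSpace f t s) (S⁻¹ * y))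
      = fun z => (S⁻¹) ^ α * iteratedDeriv α (fun t => scaleSpace f t s) (S⁻¹ * z) :=
    iteratedDeriv_comp_const_mul' (fun t => scaleSpace f t s) (inv_ne_zero hS.ne') α
  rw [hfun]
  simp only [hfun2, inv_mul_cancel_left₀ hS.ne']
  set r := γ * (α : ℝ) / 2
  set D := iteratedDeriv α (fun t => scaleSpace f t s) x
  have h1 : ((S : ℝ)⁻¹) ^ α = S ^ (-(α : ℝ)) := by
    rw [← Real.rpow_natCast S⁻¹ α, Real.inv_rpow hS.le, ← Real.rpow_neg hS.le]
  have h2 : (S ^ 2 * s) ^ r = S ^ (2 * r) * s ^ r := by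
    rw [Real.mul_rpow (by positivity) hs.le]
    congr 1
    rw [← Real.rpow_natCast S 2, ← Real.rpow_mul hS.le]
    norm_num [mul_comm]
  rw [h1, h2]
  have h3 : S ^ ((α : ℝ) * (1 - γ)) * (S ^ (2 * r) * s ^ r * (S ^ (-(α : ℝ)) * D))
      = (S ^ ((α : ℝ) * (1 - γ)) * S ^ (2 * r) * S ^ (-(α : ℝ))) * (s ^ r * D) := by ring
  rw [h3, ← Real.rpow_add hS, ← Real.rpow_add hS]
  have h4 : (α : ℝ) * (1 - γ) + 2 * r + -(α : ℝ) = 0 := by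
    simp only [r]; ring
  rw [h4, Real.rpow_zero, one_mul]
end
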